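/- (Algebra of s-piders) Let I, J, I', J' ⊆ {1,…,s} each be empty or a singleton. The s-pider query f^I_J is applicable to the red ideal s-pider S^{I'}_{J'}(red) if and only if I' ⊆ I and J' ⊆ J; and if so, applying the corresponding green-red TGD to S^{I'}_{J'}(red) produces (a copy of) the green ideal s-pider S^{I∖I'}_{J∖J'}(green). The same holds with the colors reversed. -/
import Mathlib


/-!  A general framework for relational structures, conjunctive queries,
tuple generating dependencies (TGDs), and the chase, following
Gogacz–Marcinkowski, "The Hunt for a Red Spider: Conjunctive Query
Determinacy Is Undecidable". -/

namespace CQD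

/-- A relational structure over relation symbols `R` and domain `D`:
a set of atoms, each a relation symbol together with its tuple of arguments. -/
abbrev Struc (R D : Type*) := Set (R × List D)

/-- Map a structure along a function on domain elements. -/
def smap {R D E : Type*} (h : D → E) (S : Struc R D) : Struc R E :=
  (fun a => (a.1, a.2.map h)) '' S

/-- Terms over constants `K`: variables (natural numbers) or constants. -/
abbrev Term (K : Type*) := ℕ ⊕ K

/-- A conjunction of atoms over variables and constants from `K`. -/
abbrev Conj (R K : Type*) := Struc R (Term K)

/-- `h` is a homomorphism from the conjunction `Φ` into the structure `S`,
where the constants are interpreted by `ι`. -/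
def IsHom {R K D : Type*} (Φ : Conj R K) (S : Struc R D) (ι : K → D) (h : ℕ → D) : Prop :=
  ∀ a ∈ Φ, (a.1, a.2.map (Sum.elim h ι)) ∈ S

/-- A tuple-generating dependency `∀ x̄ ȳ (body(x̄,ȳ) → ∃ z̄ head(z̄,ȳ))`;
`frontier` is the set of universally quantified variables `ȳ` shared by body and head. -/
structure TGD (R K : Type*) where
  body : Conj R K
  head : Conj R K
  frontier : Set ℕ

/-- `Φ` holds in `S` at the tuple `b` (given on the frontier variables `fr`). -/
def holdsAt {R K D : Type*} (Φ : Conj R K) (fr : Set ℕ) (S : Struc R D) (ι : K → D)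
    (b : ℕ → D) : Prop :=
  ∃ h : ℕ → D, IsHom Φ S ι h ∧ ∀ y ∈ fr, h y = b y

/-- A structure satisfies a TGD in the usual first-order sense. -/
def TGD.sat {R K D : Type*} (T : TGD R K) (S : Struc R D) (ι : K → D) : Prop :=
  ∀ b, holdsAt T.body T.frontier S ι b → holdsAt T.head T.frontier S ι b

/-- The `ToDo` set: pairs `⟨b̄, T⟩` whose body is satisfied at `b̄` but which still
lack a witness for the head. -/
def ToDo {R K D : Type*} (𝒯 : Set (TGD R K)) (S : Struc R D) (ι : K → D) :
    Set ((ℕ → D) × TGD R K) :=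
  {p | p.2 ∈ 𝒯 ∧ holdsAt p.2.body p.2.frontier S ι p.1 ∧
       ¬ holdsAt p.2.head p.2.frontier S ι p.1}

/-- The active domain of a structure. -/
def adom {R D : Type*} (S : Struc R D) : Set D := {d | ∃ a ∈ S, d ∈ a.2}

/-- `S'` is the result of one application `T(S, b̄)` of the TGD `T` to `S` at tuple `b̄`:
a fresh copy of the head is added, its frontier variables identified with `b̄`. -/
def IsStep {R K D : Type*} (T : TGD R K) (S : Struc R D) (ι : K → D) (b : ℕ → D)
    (S' : Struc R D) : Prop :=
  ∃ g : ℕ → D,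
    (∀ y ∈ T.frontier, g y = b y) ∧
    (∀ x ∉ T.frontier, g x ∉ adom S ∧ g x ∉ Set.range ι) ∧
    Set.InjOn g {x | x ∉ T.frontier} ∧
    S' = S ∪ smap (Sum.elim g ι) T.head

/-- Union of the stages strictly below `i`. -/
def partUnion {X : Type*} (seq : Ordinal.{0} → Set X) (i : Ordinal.{0}) : Set X :=
  ⋃ j ∈ Set.Iio i, seq j

/-- A fair chase sequence for the set `𝒯` of TGDs starting from `D0`. -/
structure ChaseSeq {R K D : Type*} (𝒯 : Set (TGD R K)) (D0 : Struc R D) (ι : K → D) where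
  len : Ordinal.{0}
  pos : 0 < len
  seq : Ordinal.{0} → Struc R D
  init : seq 0 = D0
  step : ∀ i, 0 < i → i < len →
    ∃ p ∈ ToDo 𝒯 (partUnion seq i) ι, IsStep p.2 (partUnion seq i) ι p.1 (seq i)
  fair : ∀ i < len, ∀ p ∈ ToDo 𝒯 (partUnion seq i) ι,
    ∃ k, i < k ∧ k ≤ len ∧ p ∉ ToDo 𝒯 (partUnion seq k) ι

/-- The result of a chase sequence: the union of all its stages. -/
def ChaseSeq.result {R K D : Type*} {𝒯 : Set (TGD R K)} {D0 : Struc R D} {ι : K → D}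
    (C : ChaseSeq 𝒯 D0 ι) : Struc R D := partUnion C.seq C.len

/-- `S` is (the result of) a chase of `𝒯` over `D0`. -/
def IsChase {R K D : Type*} (𝒯 : Set (TGD R K)) (D0 : Struc R D) (ι : K → D)
    (S : Struc R D) : Prop :=
  ∃ C : ChaseSeq 𝒯 D0 ι, C.result = S

/-- A conjunctive query: a conjunction of atoms with designated free variables. -/
structure CQ (R K : Type*) where
  body : Conj R K
  free : Set ℕ

/-- Colored (green/red) relation symbols: `true` = green, `false` = red. -/
abbrev CRel (R : Type*) := R × Bool

/-- Paint all atoms of a conjunction with the color `c`. -/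
def paint {R K : Type*} (c : Bool) (Φ : Conj R K) : Conj (CRel R) K :=
  (fun a => ((a.1, c), a.2)) '' Φ

/-- The view `Q(S)` defined by a query with body `Φ` and free variables `fr`
over the structure `S`: the set of satisfying assignments of the free variables. -/
def eval {R K D : Type*} (Φ : Conj R K) (fr : Set ℕ) (S : Struc R D) (ι : K → D) :
    Set (ℕ → D) :=
  {b | holdsAt Φ fr S ι b}

/-- The green-red TGD generated by `Q`, from color `c` to the opposite color
(`tgdGR true Q` is `Q^{G→R}`, `tgdGR false Q` is `Q^{R→G}`). -/
def tgdGR {R K : Type*} (c : Bool) (Q : CQ R K) : TGD (CRel R) K :=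
  ⟨paint c Q.body, paint (!c) Q.body, Q.free⟩

/-- The set `𝒯_𝒬` of green-red TGDs generated by a set of conjunctive queries. -/
def TQ {R K : Type*} (𝒬 : Set (CQ R K)) : Set (TGD (CRel R) K) :=
  {T | ∃ Q ∈ 𝒬, ∃ c : Bool, T = tgdGR c Q}

end CQD

/-! The s-pider signature, ideal s-piders, s-pider queries and the s-pider chase. -/

namespace Spider

open CQD

/-- Relation symbols of the s-pider signature: a ternary `H`, thighs `T_i, T^i`
and calves `C_i, C^i` (all binary). -/
inductive SpRel (s : ℕ) : Type
  | H : SpRel s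
  | Tlo : Fin s → SpRel s
  | Tup : Fin s → SpRel s
  | Clo : Fin s → SpRel s
  | Cup : Fin s → SpRel s

/-- Constants `c_i` (left) and `c^i` (right). -/
abbrev SpK (s : ℕ) := Fin s ⊕ Fin s

abbrev SpTerm (s : ℕ) := CQD.Term (SpK s)

/-- The head variable `z`. -/
def vz (s : ℕ) : SpTerm s := Sum.inl 0
/-- The tail variable `z₁`. -/
def vtail (s : ℕ) : SpTerm s := Sum.inl 1
/-- The antenna variable `z₂`. -/
def vant (s : ℕ) : SpTerm s := Sum.inl 2
/-- The lower knee variable `x_i`. -/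
def vx (s : ℕ) (i : Fin s) : SpTerm s := Sum.inl (2 * (i : ℕ) + 3)
/-- The upper knee variable `y_i`. -/
def vy (s : ℕ) (i : Fin s) : SpTerm s := Sum.inl (2 * (i : ℕ) + 4)
/-- The constant `c_i`. -/
def clo (s : ℕ) (i : Fin s) : SpTerm s := Sum.inr (Sum.inl i)
/-- The constant `c^i`. -/
def cup (s : ℕ) (i : Fin s) : SpTerm s := Sum.inr (Sum.inr i)

/-- The conjunction `Φ_s`:
`H(z,z₁,z₂) ∧ ⋀ᵢ T_i(z,x_i) ∧ T^i(z,y_i) ∧ C_i(x_i,c_i) ∧ C^i(y_i,c^i)`. -/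
def Phi (s : ℕ) : Conj (SpRel s) (SpK s) :=
  {(SpRel.H, [vz s, vtail s, vant s])} ∪
  ⋃ i : Fin s,
    ({(SpRel.Tlo i, [vz s, vx s i]), (SpRel.Tup i, [vz s, vy s i]),
      (SpRel.Clo i, [vx s i, clo s i]), (SpRel.Cup i, [vy s i, cup s i])} :
      Set (SpRel s × List (SpTerm s)))

/-- The ideal s-pider of color `c` with (empty-or-singleton) upper lame index `I`
and lower lame index `J`: the `c`-colored `Φ_s` with the calf atoms indexed by `I`
and `J` recolored to the opposite color. -/
def idealSp (s : ℕ) (c : Bool) (I J : Option (Fin s)) :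
    Struc (CRel (SpRel s)) (SpTerm s) :=
  {((SpRel.H, c), [vz s, vtail s, vant s])} ∪
  ⋃ i : Fin s,
    ({((SpRel.Tlo i, c), [vz s, vx s i]), ((SpRel.Tup i, c), [vz s, vy s i]),
      ((SpRel.Clo i, if J = some i then !c else c), [vx s i, clo s i]),
      ((SpRel.Cup i, if I = some i then !c else c), [vy s i, cup s i])} :
      Set (CRel (SpRel s) × List (SpTerm s)))

/-- The s-pider query `f^I_J`: the conjunction `Φ_s` with the calves indexed by
`I` (upper) and `J` (lower) removed; its free variables are the corresponding knees. -/
def spq (s : ℕ) (I J : Option (Fin s)) : CQ (SpRel s) (SpK s) where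
  body := Phi s \
    ({a | ∃ i ∈ I, a = (SpRel.Cup i, [vy s i, cup s i])} ∪
     {a | ∃ j ∈ J, a = (SpRel.Clo j, [vx s j, clo s j])})
  free := {n | (∃ i ∈ I, n = 2 * (i : ℕ) + 4) ∨ (∃ j ∈ J, n = 2 * (j : ℕ) + 3)}

/-- The set `𝔽_s` of s-pider queries (1-lame and 2-lame). -/
def SpiderQs (s : ℕ) : Set (CQ (SpRel s) (SpK s)) :=
  {q | ∃ I J : Option (Fin s), (I.isSome ∨ J.isSome) ∧ q = spq s I J}

/-- The interpretation of the constants in the canonical domain. -/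
def spι (s : ℕ) : SpK s → SpTerm s := Sum.inr

/-- `S` is (the result of) a chase of the green-red TGDs generated by `𝒬`,
starting from the ideal green full s-pider. -/
def SpChase (s : ℕ) (𝒬 : Set (CQ (SpRel s) (SpK s)))
    (S : Struc (CRel (SpRel s)) (SpTerm s)) : Prop :=
  IsChase (TQ 𝒬) (idealSp s true none none) (spι s) S

/-- `x ⊆ y` for empty-or-singleton sets coded as `Option`. -/
def osub {s : ℕ} (x y : Option (Fin s)) : Prop := ∀ i : Fin s, x = some i → y = some i

/-- `y ∖ x` for empty-or-singleton sets coded as `Option` (assuming `x ⊆ y`). -/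
def odiff {s : ℕ} (y x : Option (Fin s)) : Option (Fin s) :=
  match x with | none => y | some _ => none

/-- A copy of the canonical structure `T0` occurs inside `S` (an injective
renaming of vertices which fixes the constants). -/
def CopyIn {s : ℕ} {V : Type*} (T0 : Struc (CRel (SpRel s)) (SpTerm s))
    (ι : SpK s → V) (S : Struc (CRel (SpRel s)) V) : Prop :=
  ∃ m : SpTerm s → V, Set.InjOn m (adom T0) ∧ (∀ k, m (Sum.inr k) = ι k) ∧
    smap m T0 ⊆ S

/-- `𝒮` is an isomorphic copy of the canonical structure `T0`. -/
def IsCopy {s : ℕ} {V : Type*} (T0 : Struc (CRel (SpRel s)) (SpTerm s))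
    (ι : SpK s → V) (𝒮 : Struc (CRel (SpRel s)) V) : Prop :=
  ∃ m : SpTerm s → V, Set.InjOn m (adom T0) ∧ (∀ k, m (Sum.inr k) = ι k) ∧
    smap m T0 = 𝒮

/-- Erase the colors of a colored structure. -/
def dalt {s : ℕ} {V : Type*} (S : Struc (CRel (SpRel s)) V) : Struc (SpRel s) V :=
  (fun a => (a.1.1, a.2)) '' S

/-- `𝒮` is a real s-pider in `S`: a minimal substructure whose daltonisation
satisfies `Φ_s`. -/
def RealSpider {s : ℕ} {V : Type*} (S 𝒮 : Struc (CRel (SpRel s)) V)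
    (ι : SpK s → V) : Prop :=
  𝒮 ⊆ S ∧ (∃ h, IsHom (Phi s) (dalt 𝒮) ι h) ∧
    ∀ 𝒮' ⊂ 𝒮, ¬ ∃ h, IsHom (Phi s) (dalt 𝒮') ι h

/-- Abstract ideal s-piders: a color and the two lame indices.  `𝔸_s`. -/
abbrev ISp (s : ℕ) := Bool × Option (Fin s) × Option (Fin s)

/-- The canonical structure of an abstract ideal s-pider. -/
def idealOf (s : ℕ) (p : ISp s) : Struc (CRel (SpRel s)) (SpTerm s) :=
  idealSp s p.1 p.2.1 p.2.2

/-- The zoo: all ideal s-piders isomorphic to some real s-pider in `S`. -/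
def zoo {s : ℕ} (S : Struc (CRel (SpRel s)) (SpTerm s)) : Set (ISp s) :=
  {p | ∃ 𝒮, RealSpider S 𝒮 (spι s) ∧ IsCopy (idealOf s p) (spι s) 𝒮}

/-- Closure of a set of abstract ideal s-piders under the partial functions
`f^I_J` for `(I,J) ∈ F`. -/
def ClosedUnder {s : ℕ} (F : Set (Option (Fin s) × Option (Fin s)))
    (Z : Set (ISp s)) : Prop :=
  ∀ IJ ∈ F, ∀ p ∈ Z, osub p.2.1 IJ.1 → osub p.2.2 IJ.2 →
    (!p.1, odiff IJ.1 p.2.1, odiff IJ.2 p.2.2) ∈ Z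

end Spider

open CQD Spider

namespace SpiderAux
variable {s : ℕ}

lemma mem_idealSp_iff {c : Bool} {I J : Option (Fin s)} {a : CRel (SpRel s) × List (SpTerm s)} :
    a ∈ idealSp s c I J ↔ a = ((SpRel.H, c), [vz s, vtail s, vant s]) ∨
      ∃ i : Fin s, a = ((SpRel.Tlo i, c), [vz s, vx s i]) ∨ a = ((SpRel.Tup i, c), [vz s, vy s i]) ∨
        a = ((SpRel.Clo i, if J = some i then !c else c), [vx s i, clo s i]) ∨
        a = ((SpRel.Cup i, if I = some i then !c else c), [vy s i, cup s i]) := by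
  simp [idealSp]

lemma mem_Phi_iff {a : SpRel s × List (SpTerm s)} :
    a ∈ Phi s ↔ a = (SpRel.H, [vz s, vtail s, vant s]) ∨
      ∃ i : Fin s, a = (SpRel.Tlo i, [vz s, vx s i]) ∨ a = (SpRel.Tup i, [vz s, vy s i]) ∨
        a = (SpRel.Clo i, [vx s i, clo s i]) ∨ a = (SpRel.Cup i, [vy s i, cup s i]) := by
  simp [Phi]

lemma mem_free_iff {I J : Option (Fin s)} {n : ℕ} :
    n ∈ (spq s I J).free ↔ (∃ i : Fin s, I = some i ∧ n = 2*(i:ℕ)+4) ∨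
      ∃ j : Fin s, J = some j ∧ n = 2*(j:ℕ)+3 := by
  simp [spq, Option.mem_def]

lemma mem_body_iff {I J : Option (Fin s)} {a : SpRel s × List (SpTerm s)} :
    a ∈ (spq s I J).body ↔ a ∈ Phi s ∧
      (∀ i : Fin s, I = some i → a ≠ (SpRel.Cup i, [vy s i, cup s i])) ∧
      (∀ j : Fin s, J = some j → a ≠ (SpRel.Clo j, [vx s j, clo s j])) := by
  simp [spq, Option.mem_def, not_or]


lemma free_lt {I J : Option (Fin s)} {n : ℕ} (h : n ∈ (spq s I J).free) : n < 2*s+3 := by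
  rw [mem_free_iff] at h
  rcases h with ⟨i, _, rfl⟩ | ⟨j, _, rfl⟩
  · have := i.2; omega
  · have := j.2; omega

lemma adom_idealSp_lt {c : Bool} {I J : Option (Fin s)} {n : ℕ}
    (h : (Sum.inl n : SpTerm s) ∈ adom (idealSp s c I J)) : n < 2*s+3 := by
  obtain ⟨a, ha, hn⟩ := h
  rw [mem_idealSp_iff] at ha
  rcases ha with rfl | ⟨i, rfl | rfl | rfl | rfl⟩ <;>
    simp [vz, vtail, vant, vx, vy, clo, cup] at hn <;>
    (try have := i.2) <;> omega

-- forward: color of Clo/Cup atoms in idealSp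
lemma clo_color {c d : Bool} {I J : Option (Fin s)} {j : Fin s} {l : List (SpTerm s)}
    (h : ((SpRel.Clo j, d), l) ∈ idealSp s c I J) : d = if J = some j then !c else c := by
  rw [mem_idealSp_iff] at h
  rcases h with h | ⟨i, h | h | h | h⟩ <;> simp_all

lemma cup_color {c d : Bool} {I J : Option (Fin s)} {j : Fin s} {l : List (SpTerm s)}
    (h : ((SpRel.Cup j, d), l) ∈ idealSp s c I J) : d = if I = some j then !c else c := by
  rw [mem_idealSp_iff] at h
  rcases h with h | ⟨i, h | h | h | h⟩ <;> simp_all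

lemma isHom_paint_iff {c : Bool} {Φ : Conj (SpRel s) (SpK s)}
    {S : Struc (CRel (SpRel s)) (SpTerm s)} {h : ℕ → SpTerm s} :
    IsHom (paint c Φ) S (spι s) h ↔
      ∀ a ∈ Φ, ((a.1, c), a.2.map (Sum.elim h (spι s))) ∈ S := by
  constructor
  · intro H a ha; exact H _ ⟨a, ha, rfl⟩
  · rintro H a ⟨b, hb, rfl⟩; exact H _ hb

lemma hom_forward {c : Bool} {I J I' J' : Option (Fin s)} {h : ℕ → SpTerm s}
    (H : IsHom (paint c (spq s I J).body) (idealSp s c I' J') (spι s) h) :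
    osub I' I ∧ osub J' J := by
  rw [isHom_paint_iff] at H
  constructor
  · intro i hi
    by_contra hIi
    have hb : (SpRel.Cup i, [vy s i, cup s i]) ∈ (spq s I J).body := by
      rw [mem_body_iff]
      refine ⟨mem_Phi_iff.2 (Or.inr ⟨i, Or.inr (Or.inr (Or.inr rfl))⟩), ?_, ?_⟩
      · rintro j hj h'
        injection h' with h1 h2
        injection h1 with h1
        exact hIi (h1 ▸ hj)
      · rintro j hj h'
        injection h' with h1 h2
        injection h1
    have := cup_color (H _ hb)
    rw [if_pos hi] at this
    simp at this
  · intro j hj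
    by_contra hJj
    have hb : (SpRel.Clo j, [vx s j, clo s j]) ∈ (spq s I J).body := by
      rw [mem_body_iff]
      refine ⟨mem_Phi_iff.2 (Or.inr ⟨j, Or.inr (Or.inr (Or.inl rfl))⟩), ?_, ?_⟩
      · rintro i hi h'
        injection h' with h1 h2
        injection h1
      · rintro i hi h'
        injection h' with h1 h2
        injection h1 with h1
        exact hJj (h1 ▸ hi)
    have := clo_color (H _ hb)
    rw [if_pos hj] at this
    simp at this

lemma body_subset {c : Bool} {I J I' J' : Option (Fin s)} (hI : osub I' I) (hJ : osub J' J) :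
    ∀ a ∈ (spq s I J).body, ((a.1, c), a.2) ∈ idealSp s c I' J' := by
  intro a ha
  rw [mem_body_iff] at ha
  obtain ⟨hPhi, hCup, hClo⟩ := ha
  rw [mem_Phi_iff] at hPhi
  rw [mem_idealSp_iff]
  rcases hPhi with rfl | ⟨i, rfl | rfl | rfl | rfl⟩
  · exact Or.inl rfl
  · exact Or.inr ⟨i, Or.inl rfl⟩
  · exact Or.inr ⟨i, Or.inr (Or.inl rfl)⟩
  · refine Or.inr ⟨i, Or.inr (Or.inr (Or.inl ?_))⟩
    have hJ' : J' ≠ some i := fun h => hClo i (hJ i h) rfl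
    simp [hJ']
  · refine Or.inr ⟨i, Or.inr (Or.inr (Or.inr ?_))⟩
    have hI' : I' ≠ some i := fun h => hCup i (hI i h) rfl
    simp [hI']

lemma hom_backward {c : Bool} {I J I' J' : Option (Fin s)} (hI : osub I' I) (hJ : osub J' J) :
    IsHom (paint c (spq s I J).body) (idealSp s c I' J') (spι s) Sum.inl := by
  rw [isHom_paint_iff]
  intro a ha
  have h2 : a.2.map (Sum.elim Sum.inl (spι s)) = a.2 := by
    simp [spι, Sum.elim_inl_inr]
  rw [h2]
  exact body_subset hI hJ a ha

open Classical in
noncomputable def gmap (s : ℕ) (I J : Option (Fin s)) : ℕ → SpTerm s :=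
  fun n => if n ∈ (spq s I J).free then Sum.inl n else Sum.inl (n + (2*s+3))

lemma gmap_of_free {I J : Option (Fin s)} {n : ℕ} (h : n ∈ (spq s I J).free) :
    gmap s I J n = Sum.inl n := by simp [gmap, h]

lemma gmap_of_not_free {I J : Option (Fin s)} {n : ℕ} (h : n ∉ (spq s I J).free) :
    gmap s I J n = Sum.inl (n + (2*s+3)) := by simp [gmap, h]

lemma gmap_injective {I J : Option (Fin s)} : Function.Injective (gmap s I J) := by
  intro a b hab
  by_cases h1 : a ∈ (spq s I J).free <;> by_cases h2 : b ∈ (spq s I J).free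
  · rw [gmap_of_free h1, gmap_of_free h2] at hab; exact Sum.inl.inj hab
  · rw [gmap_of_free h1, gmap_of_not_free h2] at hab
    have := free_lt h1; have := Sum.inl.inj hab; omega
  · rw [gmap_of_not_free h1, gmap_of_free h2] at hab
    have := free_lt h2; have := Sum.inl.inj hab; omega
  · rw [gmap_of_not_free h1, gmap_of_not_free h2] at hab
    have := Sum.inl.inj hab; omega

lemma sigma_injective {I J : Option (Fin s)} :
    Function.Injective (Sum.elim (gmap s I J) (spι s)) := by
  have hg : ∀ n, ∃ m, gmap s I J n = Sum.inl m := by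
    intro n
    by_cases h : n ∈ (spq s I J).free
    · exact ⟨n, gmap_of_free h⟩
    · exact ⟨n + (2*s+3), gmap_of_not_free h⟩
  rintro (a|a) (b|b) h
  · exact congrArg Sum.inl (gmap_injective h)
  · obtain ⟨m, hm⟩ := hg a; simp only [Sum.elim_inl, Sum.elim_inr, hm, spι] at h; exact absurd h (by simp)
  · obtain ⟨m, hm⟩ := hg b; simp only [Sum.elim_inl, Sum.elim_inr, hm, spι] at h; exact absurd h (by simp)
  · exact congrArg Sum.inr (Sum.inr.inj h)

lemma copy_subset {c : Bool} {I J I' J' : Option (Fin s)} (hI : osub I' I) (hJ : osub J' J) :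
    smap (Sum.elim (gmap s I J) (spι s)) (idealSp s (!c) (odiff I I') (odiff J J')) ⊆
      idealSp s c I' J' ∪ smap (Sum.elim (gmap s I J) (spι s)) (paint (!c) (spq s I J).body) := by
  set σ := Sum.elim (gmap s I J) (spι s) with hσ
  rintro _ ⟨a, ha, rfl⟩
  rw [mem_idealSp_iff] at ha
  have hmem : ∀ b ∈ (spq s I J).body,
      ((b.1, !c), b.2.map σ) ∈
        idealSp s c I' J' ∪ smap σ (paint (!c) (spq s I J).body) :=
    fun b hb => Or.inr ⟨((b.1, !c), b.2), ⟨b, hb, rfl⟩, rfl⟩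
  rcases ha with rfl | ⟨i, rfl | rfl | rfl | rfl⟩
  · exact hmem (SpRel.H, [vz s, vtail s, vant s]) (by
      rw [mem_body_iff]
      refine ⟨mem_Phi_iff.2 (Or.inl rfl), ?_, ?_⟩
      · rintro j hj h'; injection h' with h1 _; injection h1
      · rintro j hj h'; injection h' with h1 _; injection h1)
  · exact hmem (SpRel.Tlo i, [vz s, vx s i]) (by
      rw [mem_body_iff]
      refine ⟨mem_Phi_iff.2 (Or.inr ⟨i, Or.inl rfl⟩), ?_, ?_⟩
      · rintro j hj h'; injection h' with h1 _; injection h1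
      · rintro j hj h'; injection h' with h1 _; injection h1)
  · exact hmem (SpRel.Tup i, [vz s, vy s i]) (by
      rw [mem_body_iff]
      refine ⟨mem_Phi_iff.2 (Or.inr ⟨i, Or.inr (Or.inl rfl)⟩), ?_, ?_⟩
      · rintro j hj h'; injection h' with h1 _; injection h1
      · rintro j hj h'; injection h' with h1 _; injection h1)
  · by_cases hJi : J = some i
    · left
      have hfree : 2*(i:ℕ)+3 ∈ (spq s I J).free := mem_free_iff.2 (Or.inr ⟨i, hJi, rfl⟩)
      have hx : σ (vx s i) = vx s i := by rw [hσ]; simp [vx, gmap_of_free hfree]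
      have hc : σ (clo s i) = clo s i := by rw [hσ]; simp [clo, spι]
      have hcol : (if odiff J J' = some i then !(!c) else (!c)) = (if J' = some i then !c else c) := by
        rcases hJ' : J' with _ | j'
        · simp [odiff, hJi]
        · have h1 : J = some j' := hJ j' hJ'
          rw [hJi] at h1
          injection h1 with h1
          subst h1
          simp [odiff]
      rw [mem_idealSp_iff]
      refine Or.inr ⟨i, Or.inr (Or.inr (Or.inl ?_))⟩
      simp only [List.map_cons, List.map_nil, hx, hc, hcol]
    · have hdJ : odiff J J' ≠ some i := by
        rcases J' with _ | j' <;> simp [odiff, hJi]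
      rw [if_neg hdJ]
      exact hmem (SpRel.Clo i, [vx s i, clo s i]) (by
        rw [mem_body_iff]
        refine ⟨mem_Phi_iff.2 (Or.inr ⟨i, Or.inr (Or.inr (Or.inl rfl))⟩), ?_, ?_⟩
        · rintro j hj h'; injection h' with h1 _; injection h1
        · rintro j hj h'; injection h' with h1 _; injection h1 with h1; exact hJi (h1 ▸ hj))
  · by_cases hIi : I = some i
    · left
      have hfree : 2*(i:ℕ)+4 ∈ (spq s I J).free := mem_free_iff.2 (Or.inl ⟨i, hIi, rfl⟩)
      have hy : σ (vy s i) = vy s i := by rw [hσ]; simp [vy, gmap_of_free hfree]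
      have hc : σ (cup s i) = cup s i := by rw [hσ]; simp [cup, spι]
      have hcol : (if odiff I I' = some i then !(!c) else (!c)) = (if I' = some i then !c else c) := by
        rcases hI' : I' with _ | i'
        · simp [odiff, hIi]
        · have h1 : I = some i' := hI i' hI'
          rw [hIi] at h1
          injection h1 with h1
          subst h1
          simp [odiff]
      rw [mem_idealSp_iff]
      refine Or.inr ⟨i, Or.inr (Or.inr (Or.inr ?_))⟩
      simp only [List.map_cons, List.map_nil, hy, hc, hcol]
    · have hdI : odiff I I' ≠ some i := by
        rcases I' with _ | i' <;> simp [odiff, hIi]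
      rw [if_neg hdI]
      exact hmem (SpRel.Cup i, [vy s i, cup s i]) (by
        rw [mem_body_iff]
        refine ⟨mem_Phi_iff.2 (Or.inr ⟨i, Or.inr (Or.inr (Or.inr rfl))⟩), ?_, ?_⟩
        · rintro j hj h'; injection h' with h1 _; injection h1 with h1; exact hIi (h1 ▸ hj)
        · rintro j hj h'; injection h' with h1 _; injection h1)

end SpiderAux
open CQD Spider in
/-- **Algebra of s-piders.**  The (`c`-colored) s-pider query `f^I_J`
is applicable to the ideal s-pider `S^{I'}_{J'}` of color `c` iff `I' ⊆ I` and
`J' ⊆ J`; and in that case applying the corresponding green-red TGD produces a copy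
of the ideal s-pider `S^{I∖I'}_{J∖J'}` of the opposite color.  (Quantifying over the
color `c` covers both the red case and the case with the colors reversed.) -/
theorem spider_algebra (s : ℕ) (c : Bool) (I J I' J' : Option (Fin s))
    (hq : I.isSome ∨ J.isSome) :
    ((∃ h, IsHom (paint c (spq s I J).body) (idealSp s c I' J') (spι s) h) ↔
      (osub I' I ∧ osub J' J)) ∧
    ((osub I' I ∧ osub J' J) →
      ∃ b, holdsAt (paint c (spq s I J).body) (spq s I J).free
             (idealSp s c I' J') (spι s) b ∧
        ∃ S', IsStep (tgdGR c (spq s I J)) (idealSp s c I' J') (spι s) b S' ∧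
          CopyIn (idealSp s (!c) (odiff I I') (odiff J J')) (spι s) S') := by
  constructor
  · constructor
    · rintro ⟨h, H⟩; exact SpiderAux.hom_forward H
    · rintro ⟨hI, hJ⟩; exact ⟨Sum.inl, SpiderAux.hom_backward hI hJ⟩
  · rintro ⟨hI, hJ⟩
    refine ⟨Sum.inl, ⟨Sum.inl, SpiderAux.hom_backward hI hJ, fun y _ => rfl⟩, ?_⟩
    refine ⟨idealSp s c I' J' ∪
        smap (Sum.elim (SpiderAux.gmap s I J) (spι s)) (paint (!c) (spq s I J).body),
      ⟨SpiderAux.gmap s I J, ?_, ?_, ?_, rfl⟩,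
      Sum.elim (SpiderAux.gmap s I J) (spι s),
      (SpiderAux.sigma_injective).injOn, fun k => rfl, SpiderAux.copy_subset hI hJ⟩
    · intro y hy; exact SpiderAux.gmap_of_free hy
    · intro x hx
      rw [SpiderAux.gmap_of_not_free hx]
      constructor
      · intro hmem; have := SpiderAux.adom_idealSp_lt hmem; omega
      · rintro ⟨k, hk⟩; simp [spι] at hk
    · exact (SpiderAux.gmap_injective).injOn
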